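/- Let ρ, σ be positive definite n×n matrices and 0 < α < 1, and set β = (α−1)/(2α). Then tr((σ^{−β} ρ σ^{−β})^α) equals the infimum over positive definite matrices H of α·tr(Hρ) − (α−1)·tr((H^{1/2} σ^{2β} H^{1/2})^{α/(α−1)}). -/

import Mathlib

open Matrix ComplexOrder

/-- Functional calculus for Hermitian matrices: apply `f` to the eigenvalues. -/
noncomputable def mfun {m : Type*} [Fintype m] [DecidableEq m] (f : ℝ → ℝ)
    (A : Matrix m m ℂ) : Matrix m m ℂ :=
  if hA : A.IsHermitian then
    (hA.eigenvectorUnitary : Matrix m m ℂ) *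
      Matrix.diagonal (fun i => (f (hA.eigenvalues i) : ℂ)) *
      (star (hA.eigenvectorUnitary : Matrix m m ℂ))
  else 0

/-- Real matrix power via the functional calculus. -/
noncomputable def mpow {m : Type*} [Fintype m] [DecidableEq m]
    (A : Matrix m m ℂ) (p : ℝ) : Matrix m m ℂ :=
  mfun (fun x => x ^ p) A

/-!
Put `S = σ^β` and `X = σ^{-β} ρ σ^{-β}`, so that `ρ = S X S`. The substitution `K = S H S` is
a bijection of positive definite matrices, under which `tr (H ρ) = tr (K X)`; and for
`N = S H^{1/2}` the matrices `H^{1/2} σ^{2β} H^{1/2} = Nᴴ N` and `K = N Nᴴ` have the same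
characteristic polynomial, hence the same trace of any spectral function. The objective thus
becomes `α tr (K X) + (1 - α) tr K^{α/(α-1)}`.

Let `a i` be the eigenvalues of `K` and `x i` the diagonal of `X` in an eigenbasis of `K`. The
`x i` are averages of the eigenvalues of `X` with doubly stochastic weights (squared moduli of
the entries of a unitary change of basis), so concavity of `t ↦ t^α` gives
`tr X^α ≤ ∑ x i ^ α`, and weighted AM-GM gives `x ^ α ≤ α a x + (1 - α) a^{α/(α-1)}`
termwise. Equality holds at `K = X^{α-1}`.
-/

open scoped MatrixOrder

variable {m : Type*} [Fintype m] [DecidableEq m]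

lemma Matrix.continuousOn_spectrum (A : Matrix m m ℂ) (f : ℝ → ℝ) :
    ContinuousOn f (spectrum ℝ A) :=
  A.finite_real_spectrum.continuousOn f

lemma mfun_eq_cfc {A : Matrix m m ℂ} (hA : A.IsHermitian) (f : ℝ → ℝ) :
    mfun f A = cfc f A := by
  rw [hA.cfc_eq, IsHermitian.cfc, Unitary.conjStarAlgAut_apply, mfun, dif_pos hA]
  rfl

lemma mpow_eq_cfc {A : Matrix m m ℂ} (hA : A.IsHermitian) (p : ℝ) :
    mpow A p = cfc (fun x : ℝ => x ^ p) A :=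
  mfun_eq_cfc hA _

lemma Matrix.PosDef.spectrum_pos {A : Matrix m m ℂ} (hA : A.PosDef) {x : ℝ}
    (hx : x ∈ spectrum ℝ A) : 0 < x :=
  hA.isStrictlyPositive.spectrum_pos hx

lemma isHermitian_mpow {A : Matrix m m ℂ} (hA : A.IsHermitian) (p : ℝ) :
    (mpow A p).IsHermitian := by
  rw [mpow_eq_cfc hA]
  exact cfc_predicate _ A

lemma posDef_mpow {A : Matrix m m ℂ} (hA : A.PosDef) (p : ℝ) : (mpow A p).PosDef := by
  rw [mpow_eq_cfc hA.1]
  exact isStrictlyPositive_iff_posDef.mp <|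
    (cfc_isStrictlyPositive_iff _ _ (A.continuousOn_spectrum _) hA.1).mpr
      fun x hx => Real.rpow_pos_of_pos (hA.spectrum_pos hx) p

lemma mpow_mul_mpow {A : Matrix m m ℂ} (hA : A.PosDef) (p q : ℝ) :
    mpow A p * mpow A q = mpow A (p + q) := by
  rw [mpow_eq_cfc hA.1, mpow_eq_cfc hA.1, mpow_eq_cfc hA.1,
    ← cfc_mul _ _ _ (A.continuousOn_spectrum _) (A.continuousOn_spectrum _)]
  exact cfc_congr fun x hx => (Real.rpow_add (hA.spectrum_pos hx) p q).symm

lemma mpow_mpow {A : Matrix m m ℂ} (hA : A.PosDef) (p q : ℝ) :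
    mpow (mpow A p) q = mpow A (p * q) := by
  rw [mpow_eq_cfc (isHermitian_mpow hA.1 p), mpow_eq_cfc hA.1, mpow_eq_cfc hA.1,
    ← cfc_comp (fun x : ℝ => x ^ q) (fun x : ℝ => x ^ p) A
      (hg := (A.finite_real_spectrum.image _).continuousOn _) (hf := A.continuousOn_spectrum _)]
  exact cfc_congr fun x hx => (Real.rpow_mul (hA.spectrum_pos hx).le p q).symm

lemma mpow_one {A : Matrix m m ℂ} (hA : A.IsHermitian) : mpow A 1 = A := by
  simp only [mpow_eq_cfc hA, Real.rpow_one]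
  exact cfc_id' ℝ A

lemma mpow_zero {A : Matrix m m ℂ} (hA : A.IsHermitian) : mpow A 0 = 1 := by
  simp only [mpow_eq_cfc hA, Real.rpow_zero]
  exact cfc_const_one ℝ A

lemma trace_mfun {A : Matrix m m ℂ} (hA : A.IsHermitian) (f : ℝ → ℝ) :
    (mfun f A).trace = ∑ i, (f (hA.eigenvalues i) : ℂ) := by
  rw [mfun, dif_pos hA, trace_mul_cycle, Unitary.coe_star_mul_self, one_mul, trace_diagonal]

lemma trace_mfun_eq_of_charpoly_eq {A B : Matrix m m ℂ} (hA : A.IsHermitian) (hB : B.IsHermitian)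
    (h : A.charpoly = B.charpoly) (f : ℝ → ℝ) : (mfun f A).trace = (mfun f B).trace := by
  rw [trace_mfun hA, trace_mfun hB, (hA.eigenvalues_eq_eigenvalues_iff hB).mpr h]

lemma trace_mfun_mul_conjTranspose_comm (N : Matrix m m ℂ) (f : ℝ → ℝ) :
    (mfun f (N * Nᴴ)).trace = (mfun f (Nᴴ * N)).trace :=
  trace_mfun_eq_of_charpoly_eq (isHermitian_mul_conjTranspose_self N)
    (isHermitian_conjTranspose_mul_self N) (charpoly_mul_comm N Nᴴ) f

lemma mpow_mul_mpow_neg {A : Matrix m m ℂ} (hA : A.PosDef) (p : ℝ) :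
    mpow A p * mpow A (-p) = 1 := by
  rw [mpow_mul_mpow hA, add_neg_cancel, mpow_zero hA.1]

lemma mpow_mul_mpow_neg_mul_mul_mpow_neg_mul_mpow {σ : Matrix m m ℂ} (hσ : σ.PosDef) (p : ℝ)
    (K : Matrix m m ℂ) : mpow σ p * (mpow σ (-p) * K * mpow σ (-p)) * mpow σ p = K := by
  have h := mpow_mul_mpow_neg hσ (-p)
  rw [neg_neg] at h
  simp only [← Matrix.mul_assoc, mpow_mul_mpow_neg hσ p, one_mul]
  rw [Matrix.mul_assoc, h, mul_one]

lemma posDef_mpow_mul_mul_mpow {H σ : Matrix m m ℂ} (hH : H.PosDef) (hσ : σ.PosDef)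
    (p : ℝ) : (mpow σ p * H * mpow σ p).PosDef := by
  have h := (IsUnit.posDef_star_left_conjugate_iff (posDef_mpow hσ p).isUnit).mpr hH
  rwa [star_eq_conjTranspose, (isHermitian_mpow hσ.1 p).eq] at h

lemma trace_mpow_sandwich_comm {H σ : Matrix m m ℂ} (hH : H.PosDef) (hσ : σ.PosDef)
    (β γ : ℝ) :
    (mpow (mpow H (1/2) * mpow σ (2 * β) * mpow H (1/2)) γ).trace =
      (mpow (mpow σ β * H * mpow σ β) γ).trace := by
  set R := mpow H (1/2)
  set S := mpow σ β
  have hRR : R * R = H := by rw [mpow_mul_mpow hH, add_halves, mpow_one hH.1]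
  have hSS : S * S = mpow σ (2 * β) := by rw [mpow_mul_mpow hσ, two_mul]
  have hNN : (S * R)ᴴ * (S * R) = R * mpow σ (2 * β) * R := by
    rw [conjTranspose_mul, (isHermitian_mpow hH.1 _).eq, (isHermitian_mpow hσ.1 _).eq,
      Matrix.mul_assoc, ← Matrix.mul_assoc S, hSS, Matrix.mul_assoc]
  have hNN' : S * R * (S * R)ᴴ = S * H * S := by
    rw [conjTranspose_mul, (isHermitian_mpow hH.1 _).eq, (isHermitian_mpow hσ.1 _).eq,
      Matrix.mul_assoc, ← Matrix.mul_assoc R, hRR, Matrix.mul_assoc]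
  rw [← hNN, ← hNN']
  exact (trace_mfun_mul_conjTranspose_comm _ _).symm

lemma re_trace_mfun {A : Matrix m m ℂ} (hA : A.IsHermitian) (f : ℝ → ℝ) :
    (mfun f A).trace.re = ∑ i, f (hA.eigenvalues i) := by
  simp [trace_mfun hA]

lemma diag_star_mul_diagonal_mul (W : Matrix m m ℂ) (l : m → ℝ) (i : m) :
    (star W * diagonal (fun j => (l j : ℂ)) * W) i i =
      ∑ j, ((Complex.normSq (W j i) * l j : ℝ) : ℂ) := by
  rw [mul_apply]
  simp only [mul_diagonal, star_apply]
  refine Finset.sum_congr rfl fun j _ => ?_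
  push_cast
  rw [Complex.normSq_eq_conj_mul_self, Complex.star_def]
  ring

lemma sum_normSq_col_eq_one {W : Matrix m m ℂ} (hW : W ∈ unitaryGroup m ℂ) (i : m) :
    ∑ j, Complex.normSq (W j i) = 1 := by
  have h := diag_star_mul_diagonal_mul W 1 i
  simp only [Pi.one_apply, Complex.ofReal_one, mul_one, diagonal_one,
    Matrix.mem_unitaryGroup_iff'.mp hW] at h
  exact_mod_cast (h.symm.trans (one_apply_eq i))

lemma sum_normSq_row_eq_one {W : Matrix m m ℂ} (hW : W ∈ unitaryGroup m ℂ) (j : m) :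
    ∑ i, Complex.normSq (W j i) = 1 := by
  simpa using sum_normSq_col_eq_one (Unitary.star_mem hW) j

lemma ConcaveOn.sum_comp_eigenvalues_le_sum_comp_diag {f : ℝ → ℝ} {s : Set ℝ}
    (hf : ConcaveOn ℝ s f) {A U : Matrix m m ℂ} (hA : A.IsHermitian)
    (hs : ∀ j, hA.eigenvalues j ∈ s) (hU : U ∈ unitaryGroup m ℂ) :
    ∑ j, f (hA.eigenvalues j) ≤ ∑ i, f ((star U * A * U) i i).re := by
  set W := star (hA.eigenvectorUnitary : Matrix m m ℂ) * U
  have hW : W ∈ unitaryGroup m ℂ := mul_mem (Unitary.star_mem hA.eigenvectorUnitary.2) hU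
  have hdiag (i : m) :
      ((star U * A * U) i i).re = ∑ j, Complex.normSq (W j i) * hA.eigenvalues j := by
    have hAW : star U * A * U = star W * diagonal (fun j => (hA.eigenvalues j : ℂ)) * W := by
      conv_lhs => rw [hA.spectral_theorem, Unitary.conjStarAlgAut_apply]
      simp [W, Matrix.mul_assoc]
      rfl
    rw [hAW, diag_star_mul_diagonal_mul, ← Complex.ofReal_sum, Complex.ofReal_re]
  calc ∑ j, f (hA.eigenvalues j)
      = ∑ j, (∑ i, Complex.normSq (W j i)) * f (hA.eigenvalues j) := by
        simp [sum_normSq_row_eq_one hW]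
    _ = ∑ i, ∑ j, Complex.normSq (W j i) * f (hA.eigenvalues j) := by
        simp only [Finset.sum_mul]
        exact Finset.sum_comm
    _ ≤ ∑ i, f (∑ j, Complex.normSq (W j i) * hA.eigenvalues j) :=
        Finset.sum_le_sum fun i _ => by
          simpa using hf.le_map_sum (fun j _ => Complex.normSq_nonneg _)
            (sum_normSq_col_eq_one hW i) (fun j _ => hs j)
    _ = ∑ i, f ((star U * A * U) i i).re := by simp only [hdiag]

lemma Matrix.IsHermitian.trace_mul_eq_sum_eigenvalues_mul_diag {K : Matrix m m ℂ}
    (hK : K.IsHermitian) (X : Matrix m m ℂ) :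
    (K * X).trace = ∑ i, (hK.eigenvalues i : ℂ) *
      (star (hK.eigenvectorUnitary : Matrix m m ℂ) * X * hK.eigenvectorUnitary) i i := by
  conv_lhs => rw [hK.spectral_theorem, Unitary.conjStarAlgAut_apply]
  rw [Matrix.mul_assoc, Matrix.mul_assoc, trace_mul_comm, Matrix.mul_assoc]
  simp [trace, diagonal_mul]

lemma rpow_le_mul_mul_add_mul_rpow {α a x : ℝ} (hα0 : 0 ≤ α) (hα1 : α < 1) (ha : 0 < a)
    (hx : 0 ≤ x) : x ^ α ≤ α * (a * x) + (1 - α) * a ^ (α / (α - 1)) := by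
  have hx_eq : x ^ α = (a * x) ^ α * (a ^ (α / (α - 1))) ^ (1 - α) := by
    have hexp : α / (α - 1) * (1 - α) = -α := by
      field_simp [show α - 1 ≠ 0 by linarith]
      ring
    rw [Real.mul_rpow ha.le hx, ← Real.rpow_mul ha.le, hexp, Real.rpow_neg ha.le]
    field_simp [(Real.rpow_pos_of_pos ha α).ne']
  rw [hx_eq]
  exact Real.geom_mean_le_arith_mean2_weighted hα0 (by linarith) (by positivity)
    (by positivity) (by ring)

lemma trace_mpow_le {X K : Matrix m m ℂ} (hX : X.PosDef) (hK : K.PosDef) {α : ℝ}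
    (hα0 : 0 ≤ α) (hα1 : α < 1) :
    (mpow X α).trace.re ≤
      α * (K * X).trace.re + (1 - α) * (mpow K (α / (α - 1))).trace.re := by
  set U := (hK.1.eigenvectorUnitary : Matrix m m ℂ)
  set a := hK.1.eigenvalues
  set x : m → ℝ := fun i => ((star U * X * U) i i).re
  have hx (i : m) : 0 ≤ x i :=
    (Complex.nonneg_iff.mp (hX.posSemidef.conjTranspose_mul_mul_same U).diag_nonneg).1
  have hKX : (K * X).trace.re = ∑ i, a i * x i := by
    simp [hK.1.trace_mul_eq_sum_eigenvalues_mul_diag, a, x, U]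
  calc (mpow X α).trace.re = ∑ j, hX.1.eigenvalues j ^ α := re_trace_mfun hX.1 _
    _ ≤ ∑ i, x i ^ α :=
        (Real.concaveOn_rpow hα0 hα1.le).sum_comp_eigenvalues_le_sum_comp_diag hX.1
          (fun j => (hX.eigenvalues_pos j).le) hK.1.eigenvectorUnitary.2
    _ ≤ ∑ i, (α * (a i * x i) + (1 - α) * a i ^ (α / (α - 1))) :=
        Finset.sum_le_sum fun i _ =>
          rpow_le_mul_mul_add_mul_rpow hα0 hα1 (hK.eigenvalues_pos i) (hx i)
    _ = α * (K * X).trace.re + (1 - α) * (mpow K (α / (α - 1))).trace.re := by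
        rw [Finset.sum_add_distrib, ← Finset.mul_sum, ← Finset.mul_sum, hKX, mpow,
          re_trace_mfun hK.1]

lemma isGLB_trace_mpow {X : Matrix m m ℂ} (hX : X.PosDef) {α : ℝ} (hα0 : 0 ≤ α)
    (hα1 : α < 1) :
    IsGLB {y | ∃ K : Matrix m m ℂ, K.PosDef ∧
        y = α * (K * X).trace.re + (1 - α) * (mpow K (α / (α - 1))).trace.re}
      (mpow X α).trace.re := by
  refine IsLeast.isGLB ⟨⟨mpow X (α - 1), posDef_mpow hX _, ?_⟩, ?_⟩
  · have hKX : mpow X (α - 1) * X = mpow X α := by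
      have h := mpow_mul_mpow hX (α - 1) 1
      rwa [mpow_one hX.1, sub_add_cancel] at h
    have hKγ : mpow (mpow X (α - 1)) (α / (α - 1)) = mpow X α := by
      rw [mpow_mpow hX, mul_div_cancel₀ _ (by linarith : α - 1 ≠ 0)]
    rw [hKX, hKγ]
    ring
  · rintro y ⟨K, hK, rfl⟩
    exact trace_mpow_le hX hK hα0 hα1

theorem variational_formula_inf_general {n : ℕ} (ρ σ : Matrix (Fin n) (Fin n) ℂ)
    (hρ : ρ.PosDef) (hσ : σ.PosDef) (α : ℝ) (hα0 : 0 < α) (hα1 : α < 1)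
    (β : ℝ) :
    IsGLB {x : ℝ | ∃ H : Matrix (Fin n) (Fin n) ℂ, H.PosDef ∧
        x = α * (H * ρ).trace.re -
          (α - 1) * (mpow (mpow H (1/2) * mpow σ (2 * β) * mpow H (1/2)) (α / (α - 1))).trace.re}
      ((mpow (mpow σ (-β) * ρ * mpow σ (-β)) α).trace.re) := by
  set S := mpow σ β
  set X := mpow σ (-β) * ρ * mpow σ (-β)
  have hX : X.PosDef := posDef_mpow_mul_mul_mpow hρ hσ (-β)
  have hρX : ρ = S * X * S := (mpow_mul_mpow_neg_mul_mul_mpow_neg_mul_mpow hσ β ρ).symm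
  have hvalue (H : Matrix (Fin n) (Fin n) ℂ) (hH : H.PosDef) :
      α * (H * ρ).trace.re - (α - 1) *
          (mpow (mpow H (1/2) * mpow σ (2 * β) * mpow H (1/2)) (α / (α - 1))).trace.re =
        α * (S * H * S * X).trace.re + (1 - α) * (mpow (S * H * S) (α / (α - 1))).trace.re := by
    rw [trace_mpow_sandwich_comm hH hσ, hρX, ← Matrix.mul_assoc, trace_mul_comm,
      ← Matrix.mul_assoc, ← Matrix.mul_assoc]
    ring
  convert isGLB_trace_mpow hX hα0.le hα1 using 1
  ext y
  constructor
  · rintro ⟨H, hH, rfl⟩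
    exact ⟨S * H * S, posDef_mpow_mul_mul_mpow hH hσ β, hvalue H hH⟩
  · rintro ⟨K, hK, rfl⟩
    have hH := posDef_mpow_mul_mul_mpow hK hσ (-β)
    refine ⟨_, hH, ?_⟩
    rw [hvalue _ hH, mpow_mul_mpow_neg_mul_mul_mpow_neg_mul_mpow hσ β K]

theorem variational_formula_inf {n : ℕ} (ρ σ : Matrix (Fin n) (Fin n) ℂ)
    (hρ : ρ.PosDef) (hσ : σ.PosDef) (α : ℝ) (hα0 : 0 < α) (hα1 : α < 1)
    (β : ℝ) (hβ : β = (α - 1) / (2 * α)) :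
    IsGLB {x : ℝ | ∃ H : Matrix (Fin n) (Fin n) ℂ, H.PosDef ∧
        x = α * (H * ρ).trace.re -
          (α - 1) * (mpow (mpow H (1/2) * mpow σ (2 * β) * mpow H (1/2)) (α / (α - 1))).trace.re}
      ((mpow (mpow σ (-β) * ρ * mpow σ (-β)) α).trace.re) :=
  variational_formula_inf_general ρ σ hρ hσ α hα0 hα1 β
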